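/- arXiv:1412.7017 — 5 statements merged into one kernel-verified Lean document; each statement's English description precedes it below -/
import Mathlib

section
/- Let k ≥ 1 and l ≥ 1 and let Q be a k×l integer matrix in which no row is the zero vector. Then either det(QᵀQ) = 0 or det(QᵀQ) ≥ k − l + 1. -/
/-!
For a set `S` of rows `qᵢ` of `Q` let `G_S = ∑_{i ∈ S} qᵢ qᵢᵀ`, so that `G_univ = QᵀQ`.
If `det (QᵀQ) ≠ 0` the rows span `ℝˡ`, hence some set `S₀` of at most `l` rows already spans,
and `G_S` is positive definite for every `S ⊇ S₀`; in particular `det G_S` is a positive integer.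
By the matrix determinant lemma, adding a row `q ≠ 0` to `S` multiplies `det G_S` by
`1 + qᵀ G_S⁻¹ q > 1`, so the integer `det G_S` grows by at least one. Adding the remaining
`k - |S₀| ≥ k - l` rows one at a time gives `det (QᵀQ) ≥ 1 + k - l`.
-/

open Matrix Finset

namespace Matrix

variable {m n R : Type*}

def rowGram [Semiring R] (Q : Matrix m n R) (s : Finset m) : Matrix n n R :=
  ∑ i ∈ s, vecMulVec (Q i) (Q i)

section Semiring

variable [Semiring R] (Q : Matrix m n R)

theorem rowGram_insert [DecidableEq m] {s : Finset m} {j : m} (hj : j ∉ s) :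
    Q.rowGram (insert j s) = Q.rowGram s + vecMulVec (Q j) (Q j) := by
  rw [rowGram, sum_insert hj, add_comm, rowGram]

theorem rowGram_univ [Fintype m] : Q.rowGram univ = Qᵀ * Q := by
  ext a b
  simp [rowGram, sum_apply, vecMulVec_apply, mul_apply]

theorem map_rowGram {S : Type*} [Semiring S] (f : R →+* S) (s : Finset m) :
    (Q.rowGram s).map f = (Q.map f).rowGram s := by
  ext a b
  simp [rowGram, sum_apply, vecMulVec_apply]

end Semiring

variable [Fintype n]

theorem dotProduct_rowGram_mulVec [CommSemiring R] (Q : Matrix m n R) (s : Finset m)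
    (x : n → R) : x ⬝ᵥ (Q.rowGram s *ᵥ x) = ∑ i ∈ s, (Q i ⬝ᵥ x) ^ 2 := by
  simp only [rowGram, sum_mulVec, dotProduct_sum, vecMulVec_mulVec]
  refine sum_congr rfl fun i _ => ?_
  simp [dotProduct_comm x, sq]

theorem posDef_rowGram_of_span_eq_top [DecidableEq n] (Q : Matrix m n ℝ) {s : Finset m}
    (hs : Submodule.span ℝ (Q '' s) = ⊤) : (Q.rowGram s).PosDef := by
  refine posDef_iff_dotProduct_mulVec.mpr
    ⟨(posSemidef_sum s fun i _ => posSemidef_vecMulVec_self_star (Q i)).isHermitian,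
      fun x hx => ?_⟩
  rw [star_trivial, dotProduct_rowGram_mulVec]
  by_contra! hle
  have horth : ∀ i ∈ s, Q i ⬝ᵥ x = 0 := fun i hi => pow_eq_zero_iff two_ne_zero |>.mp <|
    (sum_eq_zero_iff_of_nonneg fun i _ => sq_nonneg _).mp
      (hle.antisymm (sum_nonneg fun i _ => sq_nonneg _)) i hi
  have hdual : dotProductEquiv ℝ n x = 0 := LinearMap.ext_on hs <| by
    rintro _ ⟨i, hi, rfl⟩
    simp [dotProduct_comm x, horth i hi]
  exact hx ((dotProductEquiv ℝ n).map_eq_zero_iff.mp hdual)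

theorem det_add_vecMulVec [DecidableEq n] [CommRing R] {A : Matrix n n R} (hA : IsUnit A.det)
    (u v : n → R) : (A + vecMulVec u v).det = A.det * (1 + v ⬝ᵥ (A⁻¹ *ᵥ u)) := by
  have hfactor : A + vecMulVec u v = A * (1 + vecMulVec (A⁻¹ *ᵥ u) v) := by
    rw [Matrix.mul_add, Matrix.mul_one, mul_vecMulVec, mulVec_mulVec, mul_nonsing_inv A hA,
      one_mulVec]
  rw [hfactor, det_mul, vecMulVec_eq Unit, det_one_add_replicateCol_mul_replicateRow]

theorem det_lt_det_add_vecMulVec_self [DecidableEq n] {A : Matrix n n ℝ} (hA : A.PosDef)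
    {u : n → ℝ} (hu : u ≠ 0) : A.det < (A + vecMulVec u u).det := by
  have hquad : 0 < u ⬝ᵥ (A⁻¹ *ᵥ u) := by simpa using hA.inv.dotProduct_mulVec_pos hu
  rw [det_add_vecMulVec ((isUnit_iff_isUnit_det A).mp hA.isUnit)]
  nlinarith [hA.det_pos]

theorem span_row_eq_top_of_det_transpose_mul_self_ne_zero [DecidableEq n] [Fintype m]
    {K : Type*} [Field K] [LinearOrder K] [IsStrictOrderedRing K] (A : Matrix m n K)
    (h : (Aᵀ * A).det ≠ 0) : Submodule.span K (Set.range A.row) = ⊤ := by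
  apply Submodule.eq_top_of_finrank_eq
  rw [Module.finrank_fintype_fun_eq_card, ← rank_eq_finrank_span_row, ← rank_transpose_mul_self,
    rank_of_isUnit _ ((isUnit_iff_isUnit_det _).mpr (isUnit_iff_ne_zero.mpr h)), Fintype.card]

section Int

variable [DecidableEq n] (Q : Matrix m n ℤ)

theorem det_rowGram_intCast (s : Finset m) :
    ((Q.rowGram s).det : ℝ) = ((Q.map (Int.cast : ℤ → ℝ)).rowGram s).det :=
  ((Int.castRingHom ℝ).map_det _).trans (congrArg det (map_rowGram Q _ s))

theorem one_le_det_rowGram {s : Finset m}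
    (hs : Submodule.span ℝ (Q.map (Int.cast : ℤ → ℝ) '' s) = ⊤) : 1 ≤ (Q.rowGram s).det := by
  have hpos : (0 : ℝ) < (Q.rowGram s).det := by
    rw [det_rowGram_intCast]
    exact (posDef_rowGram_of_span_eq_top _ hs).det_pos
  exact_mod_cast hpos

theorem det_rowGram_lt_det_rowGram_insert [DecidableEq m] {s : Finset m}
    (hs : Submodule.span ℝ (Q.map (Int.cast : ℤ → ℝ) '' s) = ⊤) {j : m} (hj : j ∉ s)
    (hQj : Q j ≠ 0) : (Q.rowGram s).det < (Q.rowGram (insert j s)).det := by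
  have hQj' : Q.map (Int.cast : ℤ → ℝ) j ≠ 0 := fun h =>
    hQj (funext fun b => by simpa using congrFun h b)
  have hlt := det_lt_det_add_vecMulVec_self (posDef_rowGram_of_span_eq_top _ hs) hQj'
  rw [← rowGram_insert _ hj, ← det_rowGram_intCast, ← det_rowGram_intCast] at hlt
  exact_mod_cast hlt

end Int

end Matrix

theorem Finset.add_card_sdiff_le_of_lt_insert {ι : Type*} [DecidableEq ι] {f : Finset ι → ℤ}
    {s₀ : Finset ι} (hf : ∀ s, s₀ ⊆ s → ∀ j ∉ s, f s < f (insert j s)) {s : Finset ι}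
    (h : s₀ ⊆ s) : f s₀ + #(s \ s₀) ≤ f s := by
  induction s using Finset.strongInduction with
  | H s ih =>
    obtain rfl | ⟨j, hjs, hjs₀⟩ := (eq_or_ssubset_of_subset h).imp id exists_of_ssubset
    · simp
    have hsub : s₀ ⊆ s.erase j := subset_erase.mpr ⟨h, hjs₀⟩
    have hlt := hf _ hsub j (notMem_erase j s)
    rw [insert_erase hjs] at hlt
    have hcard : #(s \ s₀) = #((s.erase j) \ s₀) + 1 := by
      rw [erase_sdiff_comm, card_erase_of_mem (mem_sdiff.mpr ⟨hjs, hjs₀⟩),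
        Nat.sub_add_cancel (card_pos.mpr ⟨j, mem_sdiff.mpr ⟨hjs, hjs₀⟩⟩)]
    have := ih _ (erase_ssubset hjs) hsub
    push_cast [hcard]
    omega

theorem Submodule.exists_finset_card_le_finrank_span_image_eq {K V ι : Type*} [DivisionRing K]
    [AddCommGroup V] [Module K V] [FiniteDimensional K V] [Fintype ι] (v : ι → V) :
    ∃ s : Finset ι, #s ≤ Module.finrank K V ∧ span K (v '' s) = span K (Set.range v) := by
  classical
  obtain ⟨κ, a, ha, hspan, hli⟩ := exists_linearIndependent' K v
  have : Fintype κ := Fintype.ofInjective a ha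
  refine ⟨univ.image a, ?_, ?_⟩
  · rw [card_image_of_injective _ ha, card_univ]
    exact hli.fintype_card_le_finrank
  · rw [coe_image, coe_univ, Set.image_univ, ← Set.range_comp, hspan]

theorem det_transpose_mul_self_eq_zero_or_ge_general (k l : ℕ)
    (Q : Matrix (Fin k) (Fin l) ℤ) (hrows : ∀ i, Q i ≠ 0) :
    (Qᵀ * Q).det = 0 ∨ (k : ℤ) - (l : ℤ) + 1 ≤ (Qᵀ * Q).det := by
  refine or_iff_not_imp_left.mpr fun hdet => ?_
  set Qℝ := Q.map (Int.cast : ℤ → ℝ)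
  have hspan : Submodule.span ℝ (Set.range Qℝ.row) = ⊤ := by
    refine span_row_eq_top_of_det_transpose_mul_self_ne_zero Qℝ ?_
    rw [← rowGram_univ, ← det_rowGram_intCast, rowGram_univ]
    exact_mod_cast hdet
  obtain ⟨s₀, hcard, hs₀⟩ := Submodule.exists_finset_card_le_finrank_span_image_eq (K := ℝ) Qℝ.row
  rw [hspan] at hs₀
  rw [Module.finrank_fin_fun] at hcard
  have hsup (s : Finset (Fin k)) (h : s₀ ⊆ s) : Submodule.span ℝ (Qℝ '' s) = ⊤ :=
    top_unique (hs₀ ▸ Submodule.span_mono (Set.image_mono (coe_subset.mpr h)))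
  have hgrow := add_card_sdiff_le_of_lt_insert (f := fun s => (Q.rowGram s).det)
    (fun s h j hj => det_rowGram_lt_det_rowGram_insert Q (hsup s h) hj (hrows j)) (subset_univ s₀)
  have hbase := one_le_det_rowGram Q hs₀
  have hsplit := card_sdiff_add_card_eq_card (subset_univ s₀)
  rw [card_univ, Fintype.card_fin] at hsplit
  rw [rowGram_univ] at hgrow
  omega

/-- Lemma 2 of the paper.
Let `k ≥ 1`, `l ≥ 1` and let `Q` be a `k × l` integer matrix in which no row is the
zero vector. Then either `det (Qᵀ * Q) = 0` or `det (Qᵀ * Q) ≥ k - l + 1`. -/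
theorem det_transpose_mul_self_eq_zero_or_ge (k l : ℕ) (hk : 1 ≤ k) (hl : 1 ≤ l)
    (Q : Matrix (Fin k) (Fin l) ℤ) (hrows : ∀ i, Q i ≠ 0) :
    (Qᵀ * Q).det = 0 ∨ (k : ℤ) - (l : ℤ) + 1 ≤ (Qᵀ * Q).det :=
  det_transpose_mul_self_eq_zero_or_ge_general k l Q hrows
end

section
/- Let s ≥ 1 and let l₁, …, l_s and k₁, …, k_s be positive integers with kᵢ > lᵢ for all i. Then ∏_{i=1}^{s} ( lᵢ(kᵢ − lᵢ) + 1 ) ≥ ( Σ_{i=1}^{s} lᵢ ) · ( Σ_{i=1}^{s} (kᵢ − lᵢ) ), unless s = 3 and (lᵢ, kᵢ) = (1, 2) for i = 1, 2, 3; in that exceptional case the left-hand side equals 8 and the right-hand side equals 9. -/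
/-!
Write `A = ∑ aᵢ`, `B = ∑ bᵢ` and `P = ∏ (aᵢ bᵢ + 1)`. Adding an index with values `x, y ≥ 1`
multiplies `P` by `xy + 1` and turns `AB` into `(A + x)(B + y)`, which is at most `AB(xy + 1)`
as soon as `A, B ≥ 2` and `xy ≥ 2`, and at most `(AB - 1)(xy + 1)` as soon as `A, B ≥ 3`.
So `AB ≤ P` propagates by induction from the two-index case `(a + c)(b + d) ≤ (ab + 1)(cd + 1)`.
The one failure is three indices with all `aᵢ = bᵢ = 1`, where `AB = 9 = P + 1`; the weaker
bound `AB ≤ P + 1` is still enough to pass to four indices and beyond.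
-/

namespace Nat

theorem add_mul_add_le_mul_add_one_mul_mul_add_one {a b c d : ℕ} (ha : 0 < a) (hb : 0 < b)
    (hc : 0 < c) (hd : 0 < d) : (a + c) * (b + d) ≤ (a * b + 1) * (c * d + 1) := by
  have had : 0 < a * d := by positivity
  have hcb : 0 < c * b := by positivity
  nlinarith [Nat.mul_le_mul had hcb]

theorem add_mul_add_le_mul_mul_mul_add_one {A B x y : ℕ} (hA : 2 ≤ A) (hB : 2 ≤ B)
    (hx : 0 < x) (hy : 0 < y) (hxy : 2 ≤ x * y) : (A + x) * (B + y) ≤ A * B * (x * y + 1) := by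
  have hAB : 4 * (x * y) ≤ A * B * (x * y) := Nat.mul_le_mul_right _ (by nlinarith)
  rcases Nat.lt_or_ge x 2 with h | h
  · have hAy : 4 ≤ A * y := by nlinarith
    have hBx : 2 ≤ B * x := by nlinarith
    nlinarith [Nat.mul_le_mul_right (A * y) hBx, Nat.mul_le_mul_right (B * x) hAy]
  · have hAy : 2 ≤ A * y := by nlinarith
    have hBx : 4 ≤ B * x := by nlinarith
    nlinarith [Nat.mul_le_mul_right (A * y) hBx, Nat.mul_le_mul_right (B * x) hAy]

theorem add_mul_add_le_mul_mul_add_one {A B P x y : ℕ} (hA : 3 ≤ A) (hB : 3 ≤ B)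
    (hx : 0 < x) (hy : 0 < y) (hP : A * B ≤ P + 1) : (A + x) * (B + y) ≤ P * (x * y + 1) := by
  have hAy : 3 ≤ A * y := by nlinarith
  have hBx : 3 ≤ B * x := by nlinarith
  have hAB : 9 * (x * y) ≤ A * B * (x * y) := Nat.mul_le_mul_right _ (by nlinarith)
  have hxy : 0 < x * y := Nat.mul_pos hx hy
  nlinarith [Nat.mul_le_mul_right (A * y) hBx, Nat.mul_le_mul_right (B * x) hAy,
    Nat.mul_le_mul_right (x * y + 1) hP]

end Nat

namespace Finset

variable {ι : Type*} {s : Finset ι} {a b : ι → ℕ}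

theorem card_le_sum_of_pos (ha : ∀ i ∈ s, 0 < a i) : #s ≤ ∑ i ∈ s, a i := by
  simpa using s.card_nsmul_le_sum a 1 ha

theorem sum_mul_sum_le_prod_of_card_le_two (hs : #s ≤ 2) (ha : ∀ i ∈ s, 0 < a i)
    (hb : ∀ i ∈ s, 0 < b i) : (∑ i ∈ s, a i) * (∑ i ∈ s, b i) ≤ ∏ i ∈ s, (a i * b i + 1) := by
  classical
  interval_cases h : #s
  · simp_all
  · obtain ⟨i, rfl⟩ := card_eq_one.1 h
    simp
  · obtain ⟨i, j, hij, rfl⟩ := card_eq_two.1 h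
    simp only [mem_insert, mem_singleton, forall_eq_or_imp, forall_eq] at ha hb
    simpa [hij] using Nat.add_mul_add_le_mul_add_one_mul_mul_add_one ha.1 hb.1 ha.2 hb.2

theorem sum_mul_sum_le_prod_of_card_eq_three (hs : #s = 3) (ha : ∀ i ∈ s, 0 < a i)
    (hb : ∀ i ∈ s, 0 < b i) (hab : ∃ i ∈ s, a i * b i ≠ 1) :
    (∑ i ∈ s, a i) * (∑ i ∈ s, b i) ≤ ∏ i ∈ s, (a i * b i + 1) := by
  classical
  obtain ⟨i, hi, hi1⟩ := hab
  set t := s.erase i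
  have ht : #t = 2 := by simp [t, card_erase_of_mem hi, hs]
  have hat : ∀ j ∈ t, 0 < a j := fun j hj => ha j (mem_of_mem_erase hj)
  have hbt : ∀ j ∈ t, 0 < b j := fun j hj => hb j (mem_of_mem_erase hj)
  have hti : i ∉ t := notMem_erase i s
  rw [← insert_erase hi, sum_insert hti, sum_insert hti, prod_insert hti]
  have hxy : 2 ≤ a i * b i := by have := Nat.mul_pos (ha i hi) (hb i hi); omega
  calc (a i + ∑ j ∈ t, a j) * (b i + ∑ j ∈ t, b j)
      = ((∑ j ∈ t, a j) + a i) * ((∑ j ∈ t, b j) + b i) := by ring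
    _ ≤ (∑ j ∈ t, a j) * (∑ j ∈ t, b j) * (a i * b i + 1) :=
        Nat.add_mul_add_le_mul_mul_mul_add_one (ht ▸ card_le_sum_of_pos hat)
          (ht ▸ card_le_sum_of_pos hbt) (ha i hi) (hb i hi) hxy
    _ ≤ (∏ j ∈ t, (a j * b j + 1)) * (a i * b i + 1) :=
        Nat.mul_le_mul_right _ (sum_mul_sum_le_prod_of_card_le_two ht.le hat hbt)
    _ = (a i * b i + 1) * ∏ j ∈ t, (a j * b j + 1) := mul_comm _ _

theorem sum_mul_sum_le_prod_add_one_of_card_eq_three (hs : #s = 3) (ha : ∀ i ∈ s, 0 < a i)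
    (hb : ∀ i ∈ s, 0 < b i) :
    (∑ i ∈ s, a i) * (∑ i ∈ s, b i) ≤ (∏ i ∈ s, (a i * b i + 1)) + 1 := by
  by_cases hab : ∃ i ∈ s, a i * b i ≠ 1
  · exact (sum_mul_sum_le_prod_of_card_eq_three hs ha hb hab).trans (Nat.le_succ _)
  push Not at hab
  have ha1 : ∑ i ∈ s, a i = 3 := by
    rw [sum_congr rfl fun i hi => (mul_eq_one.1 (hab i hi)).1]; simp [hs]
  have hb1 : ∑ i ∈ s, b i = 3 := by
    rw [sum_congr rfl fun i hi => (mul_eq_one.1 (hab i hi)).2]; simp [hs]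
  rw [ha1, hb1, prod_congr rfl fun i hi => congrArg (· + 1) (hab i hi)]
  simp [hs]

theorem sum_mul_sum_le_prod_of_four_le_card (hs : 4 ≤ #s) (ha : ∀ i ∈ s, 0 < a i)
    (hb : ∀ i ∈ s, 0 < b i) : (∑ i ∈ s, a i) * (∑ i ∈ s, b i) ≤ ∏ i ∈ s, (a i * b i + 1) := by
  classical
  induction s using Finset.induction_on with
  | empty => simp at hs
  | insert j t hj ih =>
    rw [card_insert_of_notMem hj] at hs
    simp only [mem_insert, forall_eq_or_imp] at ha hb
    have hweak : (∑ i ∈ t, a i) * (∑ i ∈ t, b i) ≤ (∏ i ∈ t, (a i * b i + 1)) + 1 := by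
      rcases (show #t = 3 ∨ 4 ≤ #t by omega) with ht | ht
      · exact sum_mul_sum_le_prod_add_one_of_card_eq_three ht ha.2 hb.2
      · exact (ih ht ha.2 hb.2).trans (Nat.le_succ _)
    rw [sum_insert hj, sum_insert hj, prod_insert hj, add_comm (a j), add_comm (b j),
      mul_comm (a j * b j + 1)]
    exact Nat.add_mul_add_le_mul_mul_add_one ((card_le_sum_of_pos ha.2).trans' (by omega))
      ((card_le_sum_of_pos hb.2).trans' (by omega)) ha.1 hb.1 hweak

theorem sum_mul_sum_le_prod_or_card_eq_three (ha : ∀ i ∈ s, 0 < a i) (hb : ∀ i ∈ s, 0 < b i) :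
    (∑ i ∈ s, a i) * (∑ i ∈ s, b i) ≤ ∏ i ∈ s, (a i * b i + 1) ∨
      #s = 3 ∧ ∀ i ∈ s, a i * b i = 1 := by
  rcases (show #s ≤ 2 ∨ #s = 3 ∨ 4 ≤ #s by omega) with hs | hs | hs
  · exact Or.inl (sum_mul_sum_le_prod_of_card_le_two hs ha hb)
  · by_cases hab : ∃ i ∈ s, a i * b i ≠ 1
    · exact Or.inl (sum_mul_sum_le_prod_of_card_eq_three hs ha hb hab)
    · push Not at hab
      exact Or.inr ⟨hs, hab⟩
  · exact Or.inl (sum_mul_sum_le_prod_of_four_le_card hs ha hb)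

end Finset

open Finset in
theorem prod_ge_sum_mul_sum_or_exceptional_general (s : ℕ) (l k : Fin s → ℕ)
    (hl : ∀ i, 0 < l i) (hk : ∀ i, l i < k i) :
    (∑ i, l i) * (∑ i, (k i - l i)) ≤ ∏ i, (l i * (k i - l i) + 1) ∨
    (s = 3 ∧ (∀ i, l i = 1 ∧ k i = 2) ∧
      (∏ i, (l i * (k i - l i) + 1)) = 8 ∧ (∑ i, l i) * (∑ i, (k i - l i)) = 9) := by
  refine (sum_mul_sum_le_prod_or_card_eq_three (fun i _ => hl i)
    (fun i _ => Nat.sub_pos_of_lt (hk i))).imp_right fun ⟨hs, hone⟩ => ?_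
  have hlk : ∀ i, l i = 1 ∧ k i = 2 := fun i => by
    have := mul_eq_one.1 (hone i (mem_univ i)); have := hk i; omega
  simp only [card_univ, Fintype.card_fin] at hs
  subst hs
  refine ⟨rfl, hlk, ?_, ?_⟩ <;> simp [hlk]

/-- arithmetic inequality from the proof of Lemma 7 of the paper.
Let `s ≥ 1` and let `l₁, …, l_s`, `k₁, …, k_s` be positive integers with `kᵢ > lᵢ` for
all `i`. Then `∏ᵢ (lᵢ * (kᵢ - lᵢ) + 1) ≥ (∑ᵢ lᵢ) * (∑ᵢ (kᵢ - lᵢ))`, unless `s = 3` and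
`(lᵢ, kᵢ) = (1, 2)` for all `i`; in the exceptional case the left-hand side is `8` and
the right-hand side is `9`. -/
theorem prod_ge_sum_mul_sum_or_exceptional (s : ℕ) (hs : 1 ≤ s) (l k : Fin s → ℕ)
    (hl : ∀ i, 0 < l i) (hk : ∀ i, l i < k i) :
    (∑ i, l i) * (∑ i, (k i - l i)) ≤ ∏ i, (l i * (k i - l i) + 1) ∨
    (s = 3 ∧ (∀ i, l i = 1 ∧ k i = 2) ∧
      (∏ i, (l i * (k i - l i) + 1)) = 8 ∧ (∑ i, l i) * (∑ i, (k i - l i)) = 9) :=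
  prod_ge_sum_mul_sum_or_exceptional_general s l k hl hk
end

section
/- Let m ≥ 1 and l ≥ 1 be integers and let x = (x₁, …, x_l) ∈ ℤ^l be a nonzero vector with exactly α nonzero entries. Then Σ_{i=1}^{l} xᵢ² + m·Σ_{1≤i<j≤l} (xᵢ − xⱼ)² ≥ α + m·α·(l − α) ≥ l. Moreover, if Σ_{i} xᵢ² + m·Σ_{i<j} (xᵢ − xⱼ)² = l, then x = (1, …, 1) or x = −(1, …, 1), or m = 1 and x = ±eⱼ for some standard basis vector eⱼ of ℤ^l. -/
/-!
Replace `x` by the 0/1 indicator `c` of its support. Since distinct integers differ by at least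
one, `cᵢ² ≤ xᵢ²` and `(cᵢ - cⱼ)² ≤ (xᵢ - xⱼ)²`, so the form only decreases. For a 0/1 vector,
Lagrange's identity `∑_{i<j} (cᵢ - cⱼ)² = l ∑ cᵢ² - (∑ cᵢ)²` evaluates the form to
`α + m α (l - α)`, and `α + m α (l - α) - l = (α - 1)(l - α) + (m - 1) α (l - α) ≥ 0`.
In the equality case every termwise bound is tight: the nonzero entries are `±1` and pairwise
equal, and either `α = l` or `α = m = 1`.
-/

open Finset

section QuadForm

variable {ι R : Type*} [LinearOrder ι] [Fintype ι] [LocallyFiniteOrderTop ι]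
  [CommRing R] [LinearOrder R] [IsStrictOrderedRing R]

def quadForm (m : R) (x : ι → R) : R :=
  ∑ i, x i ^ 2 + m * ∑ i, ∑ j ∈ Ioi i, (x i - x j) ^ 2

theorem sum_sum_Ioi_sub_sq [LocallyFiniteOrderBot ι] (y : ι → R) :
    ∑ i, ∑ j ∈ Ioi i, (y i - y j) ^ 2 = Fintype.card ι * ∑ i, y i ^ 2 - (∑ i, y i) ^ 2 := by
  have hdiag (i : ι) : ∑ j ∈ {i}ᶜ, (y j - y i) ^ 2 = ∑ j, (y j - y i) ^ 2 := by
    rw [compl_singleton]; exact sum_erase _ (by simp)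
  refine mul_left_cancel₀ (two_ne_zero (α := R)) ?_
  calc 2 * ∑ i, ∑ j ∈ Ioi i, (y i - y j) ^ 2
      = ∑ i, ∑ j ∈ Ioi i, ((y j - y i) ^ 2 + (y i - y j) ^ 2) := by
        simp only [mul_sum]; exact sum_congr rfl fun i _ => sum_congr rfl fun j _ => by ring
    _ = ∑ i, ∑ j, (y j - y i) ^ 2 := by
        rw [sum_sum_Ioi_add_eq_sum_sum_off_diag]; exact sum_congr rfl fun i _ => hdiag i
    _ = 2 * (Fintype.card ι * ∑ i, y i ^ 2 - (∑ i, y i) ^ 2) := by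
        simp only [sub_sq, sum_add_distrib, sum_sub_distrib, sum_const, card_univ, ← mul_sum,
          ← sum_mul, nsmul_eq_mul]
        ring

theorem quadForm_of_sq_eq_self [LocallyFiniteOrderBot ι] (m : R) {y : ι → R}
    (hy : ∀ i, y i ^ 2 = y i) :
    quadForm m y = ∑ i, y i + m * ((∑ i, y i) * (Fintype.card ι - ∑ i, y i)) := by
  rw [quadForm, sum_sum_Ioi_sub_sq, sum_congr rfl fun i _ => hy i]
  ring

variable {m : R} {x y : ι → R}

theorem quadForm_le_quadForm (hm : 0 ≤ m) (hsq : ∀ i, y i ^ 2 ≤ x i ^ 2)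
    (hdiff : ∀ i j, (y i - y j) ^ 2 ≤ (x i - x j) ^ 2) : quadForm m y ≤ quadForm m x :=
  add_le_add (sum_le_sum fun i _ => hsq i)
    (mul_le_mul_of_nonneg_left (sum_le_sum fun i _ => sum_le_sum fun j _ => hdiff i j) hm)

theorem sq_eq_sq_of_quadForm_eq (hm : 0 < m) (hsq : ∀ i, y i ^ 2 ≤ x i ^ 2)
    (hdiff : ∀ i j, (y i - y j) ^ 2 ≤ (x i - x j) ^ 2) (h : quadForm m y = quadForm m x) :
    (∀ i, y i ^ 2 = x i ^ 2) ∧ ∀ i j, i < j → (y i - y j) ^ 2 = (x i - x j) ^ 2 := by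
  have hs := sum_le_sum fun i (_ : i ∈ univ) => hsq i
  have hd := sum_le_sum fun i (_ : i ∈ univ) => sum_le_sum fun j (_ : j ∈ Ioi i) => hdiff i j
  unfold quadForm at h
  have hs' : ∑ i, y i ^ 2 = ∑ i, x i ^ 2 := by nlinarith [mul_le_mul_of_nonneg_left hd hm.le]
  have hd' : ∑ i, ∑ j ∈ Ioi i, (y i - y j) ^ 2 = ∑ i, ∑ j ∈ Ioi i, (x i - x j) ^ 2 := by
    rw [hs'] at h; exact mul_left_cancel₀ hm.ne' (add_left_cancel h)
  refine ⟨fun i => (sum_eq_sum_iff_of_le fun i _ => hsq i).1 hs' i (mem_univ i),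
    fun i j hij => ?_⟩
  have hrow :=
    (sum_eq_sum_iff_of_le fun i _ => sum_le_sum fun j _ => hdiff i j).1 hd' i (mem_univ i)
  exact (sum_eq_sum_iff_of_le fun j _ => hdiff i j).1 hrow j (mem_Ioi.2 hij)

end QuadForm

section Bound

variable {R : Type*} [CommRing R] [LinearOrder R] [IsStrictOrderedRing R] {a l m : R}

theorem le_add_mul_mul_sub (ha : 1 ≤ a) (hal : a ≤ l) (hm : 1 ≤ m) :
    l ≤ a + m * a * (l - a) := by
  nlinarith [mul_nonneg (sub_nonneg.2 ha) (sub_nonneg.2 hal),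
    mul_nonneg (mul_nonneg (sub_nonneg.2 hm) (zero_le_one.trans ha)) (sub_nonneg.2 hal)]

theorem eq_or_of_add_mul_mul_sub_eq (ha : 1 ≤ a) (hal : a ≤ l) (hm : 1 ≤ m)
    (h : a + m * a * (l - a) = l) : a = l ∨ a = 1 ∧ m = 1 := by
  refine hal.eq_or_lt.imp id fun hal => ?_
  have h1 : 0 ≤ (a - 1) * (l - a) := mul_nonneg (sub_nonneg.2 ha) (sub_nonneg.2 hal.le)
  have h2 : 0 ≤ (m - 1) * a * (l - a) :=
    mul_nonneg (mul_nonneg (sub_nonneg.2 hm) (zero_le_one.trans ha)) (sub_nonneg.2 hal.le)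
  have hsum : (a - 1) * (l - a) + (m - 1) * a * (l - a) = 0 := by linear_combination h
  have hla : l - a ≠ 0 := (sub_pos.2 hal).ne'
  have ha1 : a = 1 :=
    sub_eq_zero.1 ((mul_eq_zero.1 (show (a - 1) * (l - a) = 0 by linarith)).resolve_right hla)
  subst ha1
  refine ⟨rfl, sub_eq_zero.1 ((mul_eq_zero.1 ?_).resolve_right hla)⟩
  linear_combination hsum

end Bound

section Indicator

def nonzeroIndicator (a : ℤ) : ℤ := if a ≠ 0 then 1 else 0

theorem nonzeroIndicator_sq (a : ℤ) : nonzeroIndicator a ^ 2 = nonzeroIndicator a := by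
  unfold nonzeroIndicator; split_ifs <;> norm_num

theorem nonzeroIndicator_sq_le (a : ℤ) : nonzeroIndicator a ^ 2 ≤ a ^ 2 := by
  unfold nonzeroIndicator
  split_ifs with ha
  · simpa using Int.one_le_abs ha
  · positivity

theorem nonzeroIndicator_sub_sq_le (a b : ℤ) :
    (nonzeroIndicator a - nonzeroIndicator b) ^ 2 ≤ (a - b) ^ 2 := by
  rcases eq_or_ne a b with rfl | hab
  · simp
  calc (nonzeroIndicator a - nonzeroIndicator b) ^ 2 ≤ 1 := by
        unfold nonzeroIndicator; split_ifs <;> norm_num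
    _ ≤ (a - b) ^ 2 := by simpa using Int.one_le_abs (sub_ne_zero.2 hab)

variable {ι : Type*} [Fintype ι]

theorem sum_nonzeroIndicator (x : ι → ℤ) :
    ∑ i, nonzeroIndicator (x i) = #{i | x i ≠ 0} := by
  simp only [nonzeroIndicator]; exact sum_boole _ _

theorem exists_sign_of_quadForm_nonzeroIndicator_eq [LinearOrder ι] [LocallyFiniteOrderTop ι]
    {m : ℤ} (hm : 0 < m) {x : ι → ℤ}
    (h : quadForm m (fun i => nonzeroIndicator (x i)) = quadForm m x) :
    ∃ s : ℤ, (s = 1 ∨ s = -1) ∧ ∀ i, x i ≠ 0 → x i = s := by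
  obtain ⟨hsq, hdiff⟩ := sq_eq_sq_of_quadForm_eq hm (fun i => nonzeroIndicator_sq_le _)
    (fun i j => nonzeroIndicator_sub_sq_le _ _) h
  have hunit (i : ι) (hi : x i ≠ 0) : x i = 1 ∨ x i = -1 := by
    simpa [nonzeroIndicator, hi, eq_comm (a := (1 : ℤ))] using hsq i
  have hlt (i j : ι) (hij : i < j) (hi : x i ≠ 0) (hj : x j ≠ 0) : x i = x j := by
    have h0 : (x i - x j) ^ 2 = 0 := by
      simpa [nonzeroIndicator, hi, hj, eq_comm] using hdiff i j hij
    exact sub_eq_zero.1 (pow_eq_zero_iff two_ne_zero |>.1 h0)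
  by_cases hx : ∃ i, x i ≠ 0
  · obtain ⟨i₀, hi₀⟩ := hx
    refine ⟨x i₀, hunit i₀ hi₀, fun i hi => ?_⟩
    rcases lt_trichotomy i i₀ with h | rfl | h
    exacts [hlt i i₀ h hi hi₀, rfl, (hlt i₀ i h hi₀ hi).symm]
  · exact ⟨1, .inl rfl, fun i hi => (hx ⟨i, hi⟩).elim⟩

end Indicator

section Support

variable {ι M : Type*} [Fintype ι] [Zero M] [DecidableEq M] {x : ι → M} {s : M}

theorem eq_of_card_filter_ne_zero_eq_card (h : #{i | x i ≠ 0} = Fintype.card ι)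
    (hs : ∀ i, x i ≠ 0 → x i = s) (i : ι) : x i = s :=
  hs i (by simpa using card_filter_eq_iff.1 h i (mem_univ i))

theorem exists_eq_pi_single_of_card_filter_ne_zero_eq_one [DecidableEq ι]
    (h : #{i | x i ≠ 0} = 1) (hs : ∀ i, x i ≠ 0 → x i = s) : ∃ j, x = Pi.single j s := by
  obtain ⟨j, hj⟩ := card_eq_one.1 h
  have hmem (i : ι) : x i ≠ 0 ↔ i = j := by simpa using congrArg (i ∈ ·) hj
  refine ⟨j, funext fun i => ?_⟩
  rcases eq_or_ne i j with rfl | hij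
  · simpa using hs i ((hmem i).2 rfl)
  · simpa [hij] using (hmem i).not.2 hij

end Support

theorem quadForm_ge_and_eq_case_general (m : ℤ) (hm : 1 ≤ m) (l : ℕ)
    (x : Fin l → ℤ) (hx : x ≠ 0) (α : ℕ)
    (hα : α = (Finset.univ.filter fun i => x i ≠ 0).card) :
    ((α : ℤ) + m * α * ((l : ℤ) - α)
        ≤ ∑ i, (x i) ^ 2 + m * ∑ i, ∑ j ∈ Finset.Ioi i, (x i - x j) ^ 2) ∧
    ((l : ℤ) ≤ (α : ℤ) + m * α * ((l : ℤ) - α)) ∧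
    ((∑ i, (x i) ^ 2 + m * ∑ i, ∑ j ∈ Finset.Ioi i, (x i - x j) ^ 2) = (l : ℤ) →
      (∀ i, x i = 1) ∨ (∀ i, x i = -1) ∨
      (m = 1 ∧ ∃ j : Fin l, x = Pi.single j 1 ∨ x = Pi.single j (-1))) := by
  set c : Fin l → ℤ := fun i => nonzeroIndicator (x i)
  have hα1 : (1 : ℤ) ≤ α := by
    obtain ⟨i, hi⟩ := Function.ne_iff.1 hx
    exact_mod_cast hα ▸ card_pos.2 ⟨i, by simpa using hi⟩
  have hαl : (α : ℤ) ≤ l := by exact_mod_cast hα ▸ (card_filter_le _ _).trans_eq (card_fin l)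
  have hc : quadForm m c = α + m * α * (l - α) := by
    rw [quadForm_of_sq_eq_self m fun i => nonzeroIndicator_sq _, sum_nonzeroIndicator, ← hα,
      Fintype.card_fin]
    ring
  have hle : quadForm m c ≤ quadForm m x := quadForm_le_quadForm (by omega)
    (fun i => nonzeroIndicator_sq_le _) (fun i j => nonzeroIndicator_sub_sq_le _ _)
  have hbound : (l : ℤ) ≤ α + m * α * (l - α) := le_add_mul_mul_sub hα1 hαl hm
  refine ⟨hc ▸ hle, hbound, fun hE => ?_⟩
  change quadForm m x = l at hE
  obtain ⟨s, hs, hxs⟩ := exists_sign_of_quadForm_nonzeroIndicator_eq (by omega)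
    (le_antisymm hle (hE ▸ hc ▸ hbound))
  rcases eq_or_of_add_mul_mul_sub_eq hα1 hαl hm (le_antisymm (hc ▸ hE ▸ hle) hbound)
    with hα_eq_l | ⟨hα_eq_one, rfl⟩
  · have hconst := eq_of_card_filter_ne_zero_eq_card (by simp [← hα]; omega) hxs
    exact hs.imp (fun h : s = 1 => h ▸ hconst) fun h : s = -1 => .inl (h ▸ hconst)
  · obtain ⟨j, hj⟩ := exists_eq_pi_single_of_card_filter_ne_zero_eq_one (by omega) hxs
    exact .inr (.inr ⟨rfl, j, hs.imp (fun h : s = 1 => h ▸ hj) (fun h : s = -1 => h ▸ hj)⟩)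

/-- inequality with equality analysis from the proof of Proposition 5
of the paper. Let `m ≥ 1`, `l ≥ 1` and let `x ∈ ℤ^l` be nonzero with exactly `α`
nonzero entries. Then
`∑ xᵢ² + m * ∑_{i<j} (xᵢ - xⱼ)² ≥ α + m * α * (l - α) ≥ l`, and in case of equality
with `l` we have `x = ±(1, …, 1)`, or `m = 1` and `x = ±eⱼ` for some `j`. -/
theorem quadForm_ge_and_eq_case (m : ℤ) (hm : 1 ≤ m) (l : ℕ) (hl : 1 ≤ l)
    (x : Fin l → ℤ) (hx : x ≠ 0) (α : ℕ)
    (hα : α = (Finset.univ.filter fun i => x i ≠ 0).card) :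
    ((α : ℤ) + m * α * ((l : ℤ) - α)
        ≤ ∑ i, (x i) ^ 2 + m * ∑ i, ∑ j ∈ Finset.Ioi i, (x i - x j) ^ 2) ∧
    ((l : ℤ) ≤ (α : ℤ) + m * α * ((l : ℤ) - α)) ∧
    ((∑ i, (x i) ^ 2 + m * ∑ i, ∑ j ∈ Finset.Ioi i, (x i - x j) ^ 2) = (l : ℤ) →
      (∀ i, x i = 1) ∨ (∀ i, x i = -1) ∨
      (m = 1 ∧ ∃ j : Fin l, x = Pi.single j 1 ∨ x = Pi.single j (-1))) :=
  quadForm_ge_and_eq_case_general m hm l x hx α hα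
end

section
/- Let k ≥ 2 and l ≥ 2 and let Q ∈ ℤ^{k×l}. If some column of Q has exactly one nonzero entry, and that entry equals 1 or −1, then Q is decomposable. -/
open Matrix

/-- A matrix `Q ∈ ℤ^{k×l}` is *decomposable* if there are `S ∈ GL(l,ℤ)`, a row
permutation `σ` (i.e. a `k × k` permutation matrix `P`) and integers `0 < k' < k`,
`0 < l' < l` such that `P * Q * S` has block diagonal shape
`[[M₁, 0], [0, M₂]]` with `M₁ ∈ ℤ^{k'×l'}` and `M₂ ∈ ℤ^{(k-k')×(l-l')}`. -/
def Matrix.Decomposable {k l : ℕ} (Q : Matrix (Fin k) (Fin l) ℤ) : Prop :=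
  ∃ (S : Matrix (Fin l) (Fin l) ℤ) (σ : Equiv.Perm (Fin k)) (k' l' : ℕ),
    IsUnit S.det ∧ 0 < k' ∧ k' < k ∧ 0 < l' ∧ l' < l ∧
    ∀ (i : Fin k) (j : Fin l),
      (((i : ℕ) < k' ∧ l' ≤ (j : ℕ)) ∨ (k' ≤ (i : ℕ) ∧ (j : ℕ) < l')) →
        (Q.submatrix σ id * S) i j = 0

/-!
Permuting rows and columns moves the entry `±1` to position `(0, 0)`. Since this pivot is a
unit, adding suitable multiples of column `0` to the other columns (a column operation of
determinant `1`) clears row `0` outside the pivot, while column `0` is already zero outside it.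
The result is block diagonal with a `1 × 1` block and a `(k - 1) × (l - 1)` block.
-/

namespace Matrix

section ColumnOperations

variable {m n R : Type*} [Fintype n] [DecidableEq n] [CommRing R]

theorem det_one_add_vecMulVec_single_one (j : n) (v : n → R) :
    (1 + vecMulVec (Pi.single j 1) v).det = 1 + v j := by
  rw [vecMulVec_eq Unit, det_one_add_replicateCol_mul_replicateRow, dotProduct_single_one]

theorem mul_one_add_vecMulVec_single_one_apply (A : Matrix m n R) (j : n) (v : n → R)
    (r : m) (b : n) :
    (A * (1 + vecMulVec (Pi.single j 1) v : Matrix n n R)) r b = A r b + A r j * v b := by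
  rw [Matrix.mul_add, Matrix.mul_one, mul_vecMulVec, mulVec_single_one, add_apply,
    vecMulVec_apply, col_apply]

theorem exists_isUnit_det_mul_eq_zero_of_isUnit (A : Matrix m n R) {i : m} {j : n}
    (hu : IsUnit (A i j)) :
    ∃ S : Matrix n n R, IsUnit S.det ∧ (∀ r, (A * S) r j = A r j) ∧
      ∀ b, b ≠ j → (A * S) i b = 0 := by
  set v : n → R := Function.update (fun b ↦ -(↑hu.unit⁻¹ * A i b)) j 0
  refine ⟨1 + vecMulVec (Pi.single j 1) v, ?_, fun r ↦ ?_, fun b hb ↦ ?_⟩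
  · simp [det_one_add_vecMulVec_single_one, v]
  · simp [mul_one_add_vecMulVec_single_one_apply, v]
  · simp [mul_one_add_vecMulVec_single_one_apply, v, hb, ← mul_assoc]

end ColumnOperations

theorem Decomposable.of_submatrix_mul {k l : ℕ} (Q : Matrix (Fin k) (Fin l) ℤ)
    (σ : Equiv.Perm (Fin k)) (τ : Equiv.Perm (Fin l)) (S : Matrix (Fin l) (Fin l) ℤ)
    (hS : IsUnit S.det) (k' l' : ℕ) (hk' : 0 < k') (hk : k' < k) (hl' : 0 < l') (hl : l' < l)
    (hblock : ∀ (i : Fin k) (j : Fin l),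
      (((i : ℕ) < k' ∧ l' ≤ (j : ℕ)) ∨ (k' ≤ (i : ℕ) ∧ (j : ℕ) < l')) →
        (Q.submatrix σ τ * S) i j = 0) :
    Q.Decomposable := by
  refine ⟨(1 : Matrix (Fin l) (Fin l) ℤ).submatrix τ.symm id * S, σ, k', l', ?_, hk', hk, hl', hl,
    ?_⟩
  · rw [det_mul, det_permute, det_one, mul_one]
    exact ((Equiv.Perm.sign τ.symm).isUnit.map (Int.castRingHom ℤ)).mul hS
  · simpa [← Matrix.mul_assoc, mul_submatrix_one] using hblock

end Matrix

/-- fact used in Lemmas 4 and 7 of the paper.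
Let `k ≥ 2`, `l ≥ 2` and `Q ∈ ℤ^{k×l}`. If some column of `Q` has exactly one nonzero
entry and that entry is `1` or `-1`, then `Q` is decomposable. -/
theorem decomposable_of_single_unit_column (k l : ℕ) (hk : 2 ≤ k) (hl : 2 ≤ l)
    (Q : Matrix (Fin k) (Fin l) ℤ)
    (h : ∃ (j : Fin l) (i₀ : Fin k),
      (Q i₀ j = 1 ∨ Q i₀ j = -1) ∧ ∀ i, i ≠ i₀ → Q i j = 0) :
    Q.Decomposable := by
  obtain ⟨j, i₀, hunit, hcol⟩ := h
  have : NeZero k := ⟨by omega⟩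
  have : NeZero l := ⟨by omega⟩
  set σ := Equiv.swap 0 i₀
  set τ := Equiv.swap 0 j
  have hpivot : IsUnit (Q.submatrix σ τ 0 0) := by
    simpa [σ, τ, Int.isUnit_iff] using hunit
  obtain ⟨S, hS, hS_col, hS_row⟩ :=
    exists_isUnit_det_mul_eq_zero_of_isUnit (Q.submatrix σ τ) hpivot
  refine Decomposable.of_submatrix_mul Q σ τ S hS 1 1 one_pos (by omega) one_pos (by omega) ?_
  rintro r b (⟨hr, hb⟩ | ⟨hr, hb⟩)
  · rw [Nat.lt_one_iff, Fin.val_eq_zero_iff] at hr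
    exact hr ▸ hS_row b (by rintro rfl; simp at hb)
  · rw [Nat.lt_one_iff, Fin.val_eq_zero_iff] at hb
    rw [hb, hS_col, submatrix_apply]
    have hr0 : r ≠ 0 := by rintro rfl; simp at hr
    exact hcol _ (by simpa [σ, Equiv.swap_apply_eq_iff] using hr0)
end

section
/- Let Q ∈ ℤ^{k×l} with k > l be an indecomposable matrix of rank l without vanishing rows, all of whose elementary divisors (the invariant factors in the Smith normal form) equal 1. Then for every i with 1 ≤ i ≤ k, the (k−1)×l matrix obtained from Q by deleting the i-th row still has rank l. -/
/-!
If deleting row `i` drops the rank, some `v ≠ 0` has `Q v = c • eᵢ` with `c ≠ 0` (`Q` is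
injective). Elementary divisors `1` give a left inverse `L` of `Q`, so the image of `Q` is
saturated and `w := L eᵢ` satisfies `Q w = eᵢ`. Then `ℤˡ = ker (row i) ⊕ ℤ w`, and in a basis
adapted to this splitting `Q` becomes `[1] ⊕ M₂` after moving row `i` to the top, which is a
decomposition as soon as `l ≥ 2`. For `l = 1` instead, `v` forces every other row of `Q` to vanish.
-/

open Matrix

namespace Matrix

section CommRing

variable {R : Type*} [CommRing R] {m n : Type*} [Fintype n]

theorem exists_ne_zero_mulVec_eq_zero_of_rank_lt [StrongRankCondition R] {A : Matrix m n R}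
    (h : A.rank < Fintype.card n) : ∃ v ≠ 0, A *ᵥ v = 0 := by
  by_contra! hker
  have hinj : Function.Injective A.mulVecLin :=
    (injective_iff_map_eq_zero A.mulVecLin).2 fun v hv => by_contra fun h0 => hker v h0 hv
  rw [rank, LinearMap.finrank_range_of_inj hinj, Module.finrank_fintype_fun_eq_card] at h
  exact h.false

theorem mulVec_eq_single_of_submatrix_succAbove_mulVec_eq_zero {k : ℕ}
    {A : Matrix (Fin (k + 1)) n R} {i : Fin (k + 1)} {v : n → R}
    (h : A.submatrix i.succAbove id *ᵥ v = 0) : A *ᵥ v = Pi.single i ((A *ᵥ v) i) := by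
  ext r
  rcases Fin.eq_self_or_eq_succAbove i r with rfl | ⟨t, rfl⟩
  · simp
  · rw [Pi.single_eq_of_ne (Fin.succAbove_ne i t)]
    exact congrFun h t

theorem eq_zero_of_dotProduct_eq_zero_of_ne_zero [NoZeroDivisors R] [Unique n] {x v : n → R}
    (hv : v ≠ 0) (h : x ⬝ᵥ v = 0) : x = 0 := by
  have hv0 : v default ≠ 0 := fun h0 => hv (funext fun j => by rwa [Unique.eq_default j])
  rw [dotProduct, Fintype.sum_unique] at h
  exact funext fun j => by
    rw [Unique.eq_default j]
    exact (mul_eq_zero.1 h).resolve_right hv0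

theorem transpose_mul_self_eq_one_of_eq_ite {k l : ℕ} (hlk : l ≤ k)
    (E : Matrix (Fin k) (Fin l) R)
    (hE : ∀ i j, E i j = if (i : ℕ) = j then 1 else 0) : Eᵀ * E = 1 := by
  ext j j'
  rw [mul_apply, Finset.sum_eq_single (Fin.castLE hlk j)]
  · simp [hE, one_apply, Fin.val_eq_val]
  · intro r _ hr
    simp [hE, show (r : ℕ) ≠ j from fun h => hr (Fin.ext h)]
  · simp

variable [Fintype m] [DecidableEq n]

theorem exists_mul_eq_one_of_mul_mul_mul_eq_one {A : Matrix m n R}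
    {U : Matrix m m R} {V : Matrix n n R} {L : Matrix n m R} (hV : IsUnit V.det)
    (hL : L * (U * A * V) = 1) : ∃ B : Matrix n m R, B * A = 1 := by
  refine ⟨V * L * U, ?_⟩
  calc V * L * U * A = V * (L * (U * A * V)) * V⁻¹ := by
        simp only [Matrix.mul_assoc, mul_nonsing_inv V hV, Matrix.mul_one]
    _ = 1 := by rw [hL, Matrix.mul_one, mul_nonsing_inv V hV]

theorem mulVec_injective_of_mul_eq_one {B : Matrix n m R} {A : Matrix m n R} (h : B * A = 1) :
    Function.Injective A.mulVec := fun x y hxy => by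
  simpa only [mulVec_mulVec, h, one_mulVec] using congrArg (B *ᵥ ·) hxy

theorem mulVec_mulVec_eq_of_mul_eq_one [NoZeroDivisors R] {B : Matrix n m R} {A : Matrix m n R}
    (h : B * A = 1) {v : n → R} {x : m → R} {c : R} (hc : c ≠ 0) (hv : A *ᵥ v = c • x) :
    A *ᵥ (B *ᵥ x) = x := by
  have hBv : v = c • B *ᵥ x := by
    rw [← mulVec_smul, ← hv, mulVec_mulVec, h, one_mulVec]
  apply smul_right_injective (m → R) hc
  dsimp only
  rw [← mulVec_smul, ← hBv, hv]

end CommRing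

theorem decomposable_of_basis {k l : ℕ} (Q : Matrix (Fin k) (Fin l) ℤ)
    (b : Module.Basis (Fin l) ℤ (Fin l → ℤ)) (σ : Equiv.Perm (Fin k)) (k' l' : ℕ)
    (hk'₀ : 0 < k') (hk' : k' < k) (hl'₀ : 0 < l') (hl' : l' < l)
    (h : ∀ (i : Fin k) (j : Fin l),
      (((i : ℕ) < k' ∧ l' ≤ (j : ℕ)) ∨ (k' ≤ (i : ℕ) ∧ (j : ℕ) < l')) → (Q *ᵥ b j) (σ i) = 0) :
    Q.Decomposable := by
  let S := (Pi.basisFun ℤ (Fin l)).toMatrix b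
  have : Invertible S := (Pi.basisFun ℤ (Fin l)).invertibleToMatrix b
  refine ⟨S, σ, k', l', isUnit_det_of_invertible S, hk'₀, hk', hl'₀, hl', fun i j hij => ?_⟩
  rw [← h i j hij]
  simp [S, mul_apply, mulVec, dotProduct, Module.Basis.toMatrix_apply]

theorem decomposable_of_mulVec_eq_single {n l : ℕ} (hn : 0 < n) (hl : 1 < l)
    (Q : Matrix (Fin (n + 1)) (Fin l) ℤ) (i : Fin (n + 1)) (w : Fin l → ℤ)
    (hw : Q *ᵥ w = Pi.single i 1) : Q.Decomposable := by
  let φ : (Fin l → ℤ) →ₗ[ℤ] ℤ := (LinearMap.proj i).comp Q.mulVecLin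
  have hφw : φ w = 1 := by simp [φ, hw]
  obtain ⟨d, kb⟩ := Submodule.basisOfPid (Pi.basisFun ℤ (Fin l)) (LinearMap.ker φ)
  let b := Module.Basis.mkFinCons w kb
    (fun c x hx hcx => by
      have := congrArg φ hcx
      rwa [map_add, map_smul, hφw, LinearMap.mem_ker.1 hx, smul_eq_mul, mul_one, add_zero,
        map_zero] at this)
    (fun z => ⟨-φ z, by rw [LinearMap.mem_ker, map_add, map_smul, hφw, smul_eq_mul, mul_one,
      add_neg_cancel]⟩)
  obtain rfl : d + 1 = l := by
    simpa using (Module.finrank_eq_card_basis b).symm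
  refine decomposable_of_basis Q b (Equiv.swap 0 i) 1 1 one_pos (by omega) one_pos hl ?_
  intro r j hrj
  induction j using Fin.cases with
  | zero =>
    have hr : r ≠ 0 := by rintro rfl; simp at hrj
    simp only [b, Module.Basis.coe_mkFinCons, Fin.cons_zero, hw]
    exact Pi.single_eq_of_ne
      ((Equiv.swap 0 i).injective.ne hr |>.trans_eq (Equiv.swap_apply_left 0 i)) 1
  | succ t =>
    have hr : r = 0 := Fin.ext <| by rw [Fin.val_zero]; simp only [Fin.val_succ] at hrj; omega
    subst hr
    simp only [b, Module.Basis.coe_mkFinCons, Fin.cons_succ, Function.comp_apply]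
    rw [Equiv.swap_apply_left]
    exact LinearMap.mem_ker.1 (kb t).2

end Matrix

theorem rank_deleteRow_eq_of_indecomposable_general (n l : ℕ) (hkl : l < n + 1)
    (Q : Matrix (Fin (n + 1)) (Fin l) ℤ)
    (hind : ¬ Q.Decomposable) (hrows : ∀ i, Q i ≠ 0)
    (hsnf : ∃ (U : Matrix (Fin (n + 1)) (Fin (n + 1)) ℤ) (V : Matrix (Fin l) (Fin l) ℤ),
      IsUnit U.det ∧ IsUnit V.det ∧
      ∀ (i : Fin (n + 1)) (j : Fin l),
        (U * Q * V) i j = if (i : ℕ) = (j : ℕ) then 1 else 0) :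
    ∀ i : Fin (n + 1), (Q.submatrix i.succAbove id).rank = l := by
  obtain ⟨U, V, -, hV, hUQV⟩ := hsnf
  obtain ⟨L, hL⟩ := exists_mul_eq_one_of_mul_mul_mul_eq_one hV
    (transpose_mul_self_eq_one_of_eq_ite hkl.le _ hUQV)
  intro i
  by_contra hne
  have hlt : (Q.submatrix i.succAbove id).rank < Fintype.card (Fin l) := by
    simpa using lt_of_le_of_ne (rank_le_width _) hne
  obtain ⟨v, hv0, hv⟩ := exists_ne_zero_mulVec_eq_zero_of_rank_lt hlt
  have hQv := mulVec_eq_single_of_submatrix_succAbove_mulVec_eq_zero hv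
  have hc : (Q *ᵥ v) i ≠ 0 := fun h0 => hv0 <| mulVec_injective_of_mul_eq_one hL <| by
    rw [hQv, h0, Pi.single_zero, mulVec_zero]
  have hw : Q *ᵥ (L *ᵥ Pi.single i 1) = Pi.single i 1 :=
    mulVec_mulVec_eq_of_mul_eq_one hL hc <| hQv.trans <| by
      rw [← Pi.single_smul', smul_eq_mul, mul_one]
  obtain rfl | hl : l = 1 ∨ 1 < l := by rw [Fintype.card_fin] at hlt; omega
  · have hn : 0 < n := by omega
    let r := i.succAbove ⟨0, hn⟩
    exact hrows r <| eq_zero_of_dotProduct_eq_zero_of_ne_zero hv0 <|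
      (congrFun hQv r).trans (Pi.single_eq_of_ne (Fin.succAbove_ne i _) _)
  · exact hind (decomposable_of_mulVec_eq_single (by omega) hl Q i _ hw)

/-- key step in the induction of the proof of Lemma 4 of the paper.
Let `Q ∈ ℤ^{k×l}` with `k > l` (here `k = n + 1`) be an indecomposable matrix of rank
`l` without vanishing rows all of whose elementary divisors equal `1` (equivalently,
its Smith normal form is the identity on top of a zero block, expressed via unimodular
`U`, `V` with `U * Q * V = [[I_l], [0]]`). Then for every `i`, the `(k-1) × l` matrix
obtained from `Q` by deleting the `i`-th row still has rank `l`. -/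
theorem rank_deleteRow_eq_of_indecomposable (n l : ℕ) (hkl : l < n + 1)
    (Q : Matrix (Fin (n + 1)) (Fin l) ℤ)
    (hind : ¬ Q.Decomposable) (hrank : Q.rank = l) (hrows : ∀ i, Q i ≠ 0)
    (hsnf : ∃ (U : Matrix (Fin (n + 1)) (Fin (n + 1)) ℤ) (V : Matrix (Fin l) (Fin l) ℤ),
      IsUnit U.det ∧ IsUnit V.det ∧
      ∀ (i : Fin (n + 1)) (j : Fin l),
        (U * Q * V) i j = if (i : ℕ) = (j : ℕ) then 1 else 0) :
    ∀ i : Fin (n + 1), (Q.submatrix i.succAbove id).rank = l :=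
  rank_deleteRow_eq_of_indecomposable_general n l hkl Q hind hrows hsnf
end
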